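/- arXiv:2502.14400 — 3 statements merged into one kernel-verified Lean document; each statement's English description precedes it below -/
import Mathlib

section
/- For bounded rewards: if |r(y)| ≤ α₀ for all y, and q_γ is the Gibbs distribution proportional to e^{γ·r(y)}·p(y) over a finite set, then the q_γ-probability of the event {r(y) < M − ε}, where M = max_y r(y) and ε > 0, is at most e^{-γε/2} / p_ε, where p_ε = P_{y∼p}(r(y) ≥ M − ε/2) > 0. -/
theorem stmt_7 {Y : Type*} [Fintype Y] [Nonempty Y] (p r : Y → ℝ) (α₀ ε γ : ℝ)
    (hp : ∀ y, 0 < p y) (hsum : ∑ y, p y = 1) (hr : ∀ y, |r y| ≤ α₀) (hε : 0 < ε) :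
    0 < ∑ y ∈ Finset.univ.filter
          (fun y => (Finset.univ.sup' Finset.univ_nonempty r) - ε / 2 ≤ r y), p y ∧
    (∑ y ∈ Finset.univ.filter
          (fun y => r y < (Finset.univ.sup' Finset.univ_nonempty r) - ε),
        Real.exp (γ * r y) * p y / (∑ y', Real.exp (γ * r y') * p y'))
      ≤ Real.exp (-(γ * ε) / 2) /
        (∑ y ∈ Finset.univ.filter
            (fun y => (Finset.univ.sup' Finset.univ_nonempty r) - ε / 2 ≤ r y), p y) := by
  set M := Finset.univ.sup' Finset.univ_nonempty r with hM
  have hMle : ∀ y, r y ≤ M := fun y => Finset.le_sup' r (Finset.mem_univ y)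
  obtain ⟨y₀, -, hy₀⟩ := Finset.exists_mem_eq_sup' (Finset.univ_nonempty (α := Y)) r
  have hBne : (Finset.univ.filter (fun y => M - ε / 2 ≤ r y)).Nonempty := by
    refine ⟨y₀, ?_⟩
    simp only [Finset.mem_filter, Finset.mem_univ, true_and]
    have : r y₀ = M := hy₀.symm
    linarith
  have hpε : 0 < ∑ y ∈ Finset.univ.filter (fun y => M - ε / 2 ≤ r y), p y :=
    Finset.sum_pos (fun y _ => hp y) hBne
  refine ⟨hpε, ?_⟩
  have hZpos : 0 < ∑ y', Real.exp (γ * r y') * p y' :=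
    Finset.sum_pos (fun y _ => mul_pos (Real.exp_pos _) (hp y)) Finset.univ_nonempty
  have hpε1 : (∑ y ∈ Finset.univ.filter (fun y => M - ε / 2 ≤ r y), p y) ≤ 1 := by
    rw [← hsum]
    exact Finset.sum_le_sum_of_subset_of_nonneg (Finset.filter_subset _ _)
      (fun y _ _ => (hp y).le)
  rw [← Finset.sum_div]
  rcases le_or_gt 0 γ with hγ | hγ
  · have hnum : (∑ y ∈ Finset.univ.filter (fun y => r y < M - ε),
        Real.exp (γ * r y) * p y) ≤ Real.exp (γ * (M - ε)) * 1 := by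
      rw [← hsum]
      have h1 : (∑ y ∈ Finset.univ.filter (fun y => r y < M - ε),
          Real.exp (γ * r y) * p y) ≤
          ∑ y ∈ Finset.univ.filter (fun y => r y < M - ε),
            Real.exp (γ * (M - ε)) * p y := by
        refine Finset.sum_le_sum fun y hy => ?_
        have hy' : r y < M - ε := (Finset.mem_filter.mp hy).2
        exact mul_le_mul_of_nonneg_right
          (Real.exp_le_exp.mpr (mul_le_mul_of_nonneg_left hy'.le hγ)) (hp y).le
      refine h1.trans ?_
      rw [← Finset.mul_sum]
      refine mul_le_mul_of_nonneg_left ?_ (Real.exp_pos _).le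
      exact Finset.sum_le_sum_of_subset_of_nonneg (Finset.filter_subset _ _)
        (fun y _ _ => (hp y).le)
    have hden : Real.exp (γ * (M - ε / 2)) *
        (∑ y ∈ Finset.univ.filter (fun y => M - ε / 2 ≤ r y), p y)
        ≤ ∑ y', Real.exp (γ * r y') * p y' := by
      rw [Finset.mul_sum]
      refine le_trans (Finset.sum_le_sum fun y hy => ?_)
        (Finset.sum_le_sum_of_subset_of_nonneg (Finset.filter_subset _ _)
          (fun y _ _ => (mul_pos (Real.exp_pos _) (hp y)).le))
      have hy' : M - ε / 2 ≤ r y := (Finset.mem_filter.mp hy).2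
      exact mul_le_mul_of_nonneg_right
        (Real.exp_le_exp.mpr (mul_le_mul_of_nonneg_left hy' hγ)) (hp y).le
    have hdpos : 0 < Real.exp (γ * (M - ε / 2)) *
        (∑ y ∈ Finset.univ.filter (fun y => M - ε / 2 ≤ r y), p y) :=
      mul_pos (Real.exp_pos _) hpε
    calc (∑ y ∈ Finset.univ.filter (fun y => r y < M - ε),
            Real.exp (γ * r y) * p y) / (∑ y', Real.exp (γ * r y') * p y')
        ≤ (Real.exp (γ * (M - ε)) * 1) /
            (Real.exp (γ * (M - ε / 2)) *
              (∑ y ∈ Finset.univ.filter (fun y => M - ε / 2 ≤ r y), p y)) := by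
          exact div_le_div₀ (by positivity) hnum hdpos hden
      _ = Real.exp (-(γ * ε) / 2) /
            (∑ y ∈ Finset.univ.filter (fun y => M - ε / 2 ≤ r y), p y) := by
          rw [mul_one, div_mul_eq_div_div, ← Real.exp_sub]
          ring_nf
  · have hnum : (∑ y ∈ Finset.univ.filter (fun y => r y < M - ε),
        Real.exp (γ * r y) * p y) ≤ ∑ y', Real.exp (γ * r y') * p y' :=
      Finset.sum_le_sum_of_subset_of_nonneg (Finset.filter_subset _ _)
        (fun y _ _ => (mul_pos (Real.exp_pos _) (hp y)).le)
    have h1 : (∑ y ∈ Finset.univ.filter (fun y => r y < M - ε),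
        Real.exp (γ * r y) * p y) / (∑ y', Real.exp (γ * r y') * p y') ≤ 1 :=
      (div_le_one hZpos).mpr hnum
    have h2 : (1 : ℝ) ≤ Real.exp (-(γ * ε) / 2) /
        (∑ y ∈ Finset.univ.filter (fun y => M - ε / 2 ≤ r y), p y) := by
      rw [le_div_iff₀ hpε, one_mul]
      have : (1 : ℝ) ≤ Real.exp (-(γ * ε) / 2) := by
        rw [Real.one_le_exp_iff]
        nlinarith
      linarith
    linarith
end

section
/- If a random vector V ∈ ℝ^m has independent, mean-zero components each bounded in absolute value by 1, and M ∈ ℝ^{m×m} is symmetric positive semidefinite with trace at most d/m and operator norm at most 1/m, then with probability at least 1 − δ, VᵀMV ≤ C·(d + log(1/δ))/m for a universal constant C. -/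
/-!
Gaussian decoupling. Factor `(m/2) M = BᵀB` with `BBᵀ = diag e`, so that `(m/4) VᵀMV = ‖BV‖²/2`.
For a standard Gaussian vector `g` independent of `V`, `exp (‖w‖²/2) = E_g exp ⟨w, g⟩`. Since
`⟨u, V⟩` is `‖u‖²`-sub-Gaussian (Hoeffding's lemma and independence), Fubini gives
`E_V exp (‖BV‖²/2) = E_g E_V exp ⟨Bᵀg, V⟩ ≤ E_g exp (‖Bᵀg‖²/2) = E_g exp (∑ eₐ gₐ²/2)`,
a product of one-dimensional Gaussian integrals equal to `∏ (1 - eₐ)^(-1/2)`. The operator norm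
bound gives `eₐ ≤ 1/2`, where `(1 - x)^(-1/2) ≤ exp x`, hence `E exp ((m/4) VᵀMV) ≤ exp (d/2)`, and
the Chernoff bound at level `4 (d + log (1/δ)) / m` leaves a failure probability of at most `δ`.
-/

open MeasureTheory ProbabilityTheory Matrix Real

lemma dotProduct_self_nonneg {n R : Type*} [Fintype n] [Ring R] [LinearOrder R]
    [IsStrictOrderedRing R] (v : n → R) : 0 ≤ v ⬝ᵥ v :=
  Fintype.sum_nonneg fun _ ↦ mul_self_nonneg _

lemma dotProduct_transpose_mul_self_mulVec {m n : Type*} [Fintype m] [Fintype n]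
    (B : Matrix m n ℝ) (v : n → ℝ) : v ⬝ᵥ (Bᵀ * B) *ᵥ v = B *ᵥ v ⬝ᵥ B *ᵥ v := by
  rw [← mulVec_mulVec, dotProduct_mulVec, vecMul_transpose]

lemma mulVec_dotProduct_eq_transpose_mulVec_dotProduct {m n : Type*} [Fintype m] [Fintype n]
    (B : Matrix m n ℝ) (v : n → ℝ) (w : m → ℝ) : B *ᵥ v ⬝ᵥ w = Bᵀ *ᵥ w ⬝ᵥ v := by
  rw [dotProduct_comm, dotProduct_mulVec, mulVec_transpose]

lemma Matrix.PosSemidef.exists_transpose_mul_self_eq_and_mul_transpose_eq_diagonal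
    {n : Type*} [Fintype n] [DecidableEq n] {M : Matrix n n ℝ} (hM : M.PosSemidef) :
    ∃ B : Matrix n n ℝ, Bᵀ * B = M ∧ B * Bᵀ = diagonal hM.1.eigenvalues := by
  set U : Matrix n n ℝ := (hM.1.eigenvectorUnitary : Matrix n n ℝ)
  have hUtU : Uᵀ * U = 1 := by
    simpa [U, star_eq_conjTranspose] using Unitary.coe_star_mul_self hM.1.eigenvectorUnitary
  have hsqrt : diagonal (fun i ↦ √(hM.1.eigenvalues i)) * diagonal (fun i ↦ √(hM.1.eigenvalues i))
      = diagonal hM.1.eigenvalues := by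
    rw [diagonal_mul_diagonal]
    exact congrArg diagonal (funext fun i ↦ mul_self_sqrt (hM.eigenvalues_nonneg i))
  refine ⟨diagonal (fun i ↦ √(hM.1.eigenvalues i)) * Uᵀ, ?_, ?_⟩
  · have hspec := hM.1.spectral_theorem
    rw [Unitary.conjStarAlgAut_apply] at hspec
    rw [transpose_mul, transpose_transpose, diagonal_transpose, mul_assoc, ← mul_assoc _ _ Uᵀ,
      hsqrt]
    conv_rhs => rw [hspec]
    simp [U, star_eq_conjTranspose, mul_assoc]
  · rw [transpose_mul, transpose_transpose, diagonal_transpose, mul_assoc, ← mul_assoc Uᵀ, hUtU,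
      one_mul, hsqrt]

/- Test against `Bᵀ (single a 1)`: its squared norm is `e a` and that of its image is `(e a)²`. -/
lemma le_of_mul_transpose_eq_diagonal {m n : Type*} [Fintype m] [Fintype n] [DecidableEq m]
    {B : Matrix m n ℝ} {e : m → ℝ} (hBBt : B * Bᵀ = diagonal e) {c : ℝ} (hc : 0 ≤ c)
    (hB : ∀ v, B *ᵥ v ⬝ᵥ B *ᵥ v ≤ c * (v ⬝ᵥ v)) (a : m) : e a ≤ c := by
  have hBv : B *ᵥ (Bᵀ *ᵥ Pi.single a 1) = Pi.single a (e a) := by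
    rw [mulVec_mulVec, hBBt, mulVec_single_one]
    ext i; by_cases h : i = a <;> simp [h]
  have hv : Bᵀ *ᵥ Pi.single a 1 ⬝ᵥ Bᵀ *ᵥ Pi.single a 1 = e a := by
    rw [dotProduct_mulVec, vecMul_transpose, hBv]; simp
  have h := hB (Bᵀ *ᵥ Pi.single a 1)
  rw [hBv, hv] at h
  have he0 : 0 ≤ e a := hv ▸ dotProduct_self_nonneg _
  simp only [single_dotProduct, Pi.single_eq_same] at h
  nlinarith

lemma inv_sqrt_one_sub_le_exp {x : ℝ} (h0 : 0 ≤ x) (h1 : x ≤ 1 / 2) : (√(1 - x))⁻¹ ≤ exp x := by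
  rw [← sqrt_inv, sqrt_le_left (exp_pos x).le, ← exp_nat_mul, inv_le_iff_one_le_mul₀ (by linarith)]
  have := add_one_le_exp (2 * x)
  push_cast
  nlinarith

lemma gaussianPDFReal_mul_exp_mul_sq (s x : ℝ) :
    gaussianPDFReal 0 1 x * exp (s * x ^ 2) = (√(2 * π))⁻¹ * exp (-(1 / 2 - s) * x ^ 2) := by
  rw [gaussianPDFReal, mul_assoc, ← exp_add]
  congr 2
  · simp
  · push_cast; ring

lemma integrable_exp_mul_sq_gaussianReal {s : ℝ} (hs : s < 1 / 2) :
    Integrable (fun x ↦ exp (s * x ^ 2)) (gaussianReal 0 1) := by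
  rw [gaussianReal_of_var_ne_zero _ one_ne_zero,
    integrable_withDensity_iff_integrable_smul' (measurable_gaussianPDF 0 1)
      (ae_of_all _ fun _ ↦ gaussianPDF_lt_top)]
  simp_rw [toReal_gaussianPDF, smul_eq_mul, gaussianPDFReal_mul_exp_mul_sq]
  exact (integrable_exp_neg_mul_sq (by linarith)).const_mul _

lemma integral_exp_mul_sq_gaussianReal {s : ℝ} (hs : s < 1 / 2) :
    ∫ x, exp (s * x ^ 2) ∂gaussianReal 0 1 = (√(1 - 2 * s))⁻¹ := by
  rw [integral_gaussianReal_eq_integral_smul one_ne_zero]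
  simp_rw [smul_eq_mul, gaussianPDFReal_mul_exp_mul_sq, integral_const_mul, integral_gaussian]
  rw [← sqrt_inv, ← sqrt_mul (by positivity), ← sqrt_inv]
  congr 1
  have : 0 < 1 - 2 * s := by linarith
  field_simp

lemma hasSubgaussianMGF_of_abs_le_one {Ω : Type*} [MeasurableSpace Ω] {μ : Measure Ω}
    [IsProbabilityMeasure μ] {X : Ω → ℝ} (hm : AEMeasurable X μ) (hb : ∀ᵐ ω ∂μ, |X ω| ≤ 1)
    (hc : μ[X] = 0) : HasSubgaussianMGF X 1 μ := by
  convert hasSubgaussianMGF_of_mem_Icc_of_integral_eq_zero hm (hb.mono fun _ ↦ abs_le.mp) hc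
  norm_num

lemma hasSubgaussianMGF_dotProduct_of_iIndepFun {Ω ι : Type*} [MeasurableSpace Ω]
    {μ : Measure Ω} [Fintype ι] {V : ι → Ω → ℝ} (hV : iIndepFun V μ)
    (hsub : ∀ i, HasSubgaussianMGF (V i) 1 μ) (u : ι → ℝ) :
    HasSubgaussianMGF (fun ω ↦ u ⬝ᵥ fun i ↦ V i ω) (u ⬝ᵥ u).toNNReal μ := by
  have h := HasSubgaussianMGF.sum_of_iIndepFun
    (hV.comp (fun i x ↦ u i * x) fun i ↦ measurable_const_mul (u i)) (s := Finset.univ)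
    fun i _ ↦ (hsub i).const_mul (u i)
  convert h using 1
  · rfl
  · refine NNReal.eq ?_
    rw [Real.coe_toNNReal _ (dotProduct_self_nonneg u), NNReal.coe_sum]
    exact Finset.sum_congr rfl fun i _ ↦ show u i * u i = u i ^ 2 * 1 by ring

section Decoupling

variable {Ω ι κ : Type*} [MeasurableSpace Ω] {μ : Measure Ω} [Fintype ι] [Fintype κ]

local notation "𝒩" => Measure.pi fun _ : κ ↦ gaussianReal 0 1

lemma integral_exp_dotProduct_pi_gaussianReal (w : κ → ℝ) :
    ∫ g, exp (w ⬝ᵥ g) ∂𝒩 = exp (w ⬝ᵥ w / 2) := by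
  simp_rw [dotProduct, exp_sum, Finset.sum_div, exp_sum]
  rw [integral_fintype_prod_eq_prod (fun i x ↦ exp (w i * x))]
  congr! 1 with i
  simpa [mgf, sq] using congrFun (mgf_id_gaussianReal (μ := 0) (v := 1)) (w i)

lemma integrable_exp_sum_mul_sq_pi_gaussianReal {e : κ → ℝ} (he : ∀ a, e a < 1) :
    Integrable (fun g : κ → ℝ ↦ exp (∑ a, e a * g a ^ 2 / 2)) 𝒩 := by
  simp_rw [exp_sum, mul_div_right_comm]
  exact .fintype_prod fun a ↦ integrable_exp_mul_sq_gaussianReal (by linarith [he a])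

lemma integral_exp_sum_mul_sq_pi_gaussianReal {e : κ → ℝ} (he : ∀ a, e a < 1) :
    ∫ g, exp (∑ a, e a * g a ^ 2 / 2) ∂𝒩 = ∏ a, (√(1 - e a))⁻¹ := by
  simp_rw [exp_sum, mul_div_right_comm]
  rw [integral_fintype_prod_eq_prod (fun a x ↦ exp (e a / 2 * x ^ 2))]
  congr! 1 with a
  rw [integral_exp_mul_sq_gaussianReal (by linarith [he a]), mul_div_cancel₀ _ two_ne_zero]

variable {Y : Ω → ι → ℝ} {B : Matrix κ ι ℝ} {e : κ → ℝ}

lemma integral_exp_mulVec_dotProduct_le [DecidableEq κ]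
    (hY : ∀ u, HasSubgaussianMGF (fun ω ↦ u ⬝ᵥ Y ω) (u ⬝ᵥ u).toNNReal μ)
    (hBBt : B * Bᵀ = diagonal e) (g : κ → ℝ) :
    ∫ ω, exp (B *ᵥ Y ω ⬝ᵥ g) ∂μ ≤ exp (∑ a, e a * g a ^ 2 / 2) := by
  have hnorm : Bᵀ *ᵥ g ⬝ᵥ Bᵀ *ᵥ g = ∑ a, e a * g a ^ 2 := by
    rw [dotProduct_mulVec, vecMul_transpose, mulVec_mulVec, hBBt]
    simp [dotProduct, mulVec_diagonal, sq, mul_assoc]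
  have h := (hY (Bᵀ *ᵥ g)).mgf_le 1
  rw [Real.coe_toNNReal _ (dotProduct_self_nonneg _), hnorm] at h
  simp_rw [mulVec_dotProduct_eq_transpose_mulVec_dotProduct B (Y _) g]
  simpa [mgf, Finset.sum_div] using h

lemma integrable_exp_mulVec_dotProduct_pi_gaussianReal_prod [SFinite μ] [DecidableEq κ]
    (hY : ∀ u, HasSubgaussianMGF (fun ω ↦ u ⬝ᵥ Y ω) (u ⬝ᵥ u).toNNReal μ)
    (hBBt : B * Bᵀ = diagonal e) (he : ∀ a, e a < 1) :
    Integrable (fun p : (κ → ℝ) × Ω ↦ exp (B *ᵥ Y p.2 ⬝ᵥ p.1)) (Measure.prod 𝒩 μ) := by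
  have hYm : AEMeasurable Y μ := aemeasurable_pi_iff.mpr fun i ↦ by
    classical
    simpa using (hY (Pi.single i 1)).aemeasurable
  have hc : Continuous fun q : (κ → ℝ) × (ι → ℝ) ↦ exp (B *ᵥ q.2 ⬝ᵥ q.1) := by fun_prop
  have hp : AEMeasurable (fun p : (κ → ℝ) × Ω ↦ (p.1, Y p.2)) (Measure.prod 𝒩 μ) :=
    measurable_fst.aemeasurable.prodMk hYm.comp_snd
  have hm : AEStronglyMeasurable (fun p : (κ → ℝ) × Ω ↦ exp (B *ᵥ Y p.2 ⬝ᵥ p.1))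
      (Measure.prod 𝒩 μ) :=
    hc.comp_aestronglyMeasurable (f := fun p : (κ → ℝ) × Ω ↦ (p.1, Y p.2)) hp.aestronglyMeasurable
  refine (integrable_prod_iff hm).mpr ⟨ae_of_all _ fun g ↦ ?_, ?_⟩
  · simp_rw [mulVec_dotProduct_eq_transpose_mulVec_dotProduct B (Y _) g]
    simpa using (hY (Bᵀ *ᵥ g)).integrable_exp_mul 1
  · refine (integrable_exp_sum_mul_sq_pi_gaussianReal he).mono' hm.norm.integral_prod_right'
      (ae_of_all _ fun g ↦ ?_)
    rw [norm_of_nonneg (integral_nonneg fun _ ↦ norm_nonneg _)]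
    simpa only [norm_eq_abs, abs_exp] using integral_exp_mulVec_dotProduct_le hY hBBt g

theorem integral_exp_half_mulVec_dotProduct_self_le [SFinite μ] [DecidableEq κ]
    (hY : ∀ u, HasSubgaussianMGF (fun ω ↦ u ⬝ᵥ Y ω) (u ⬝ᵥ u).toNNReal μ)
    (hBBt : B * Bᵀ = diagonal e) (he : ∀ a, e a < 1) :
    Integrable (fun ω ↦ exp (B *ᵥ Y ω ⬝ᵥ B *ᵥ Y ω / 2)) μ ∧
      ∫ ω, exp (B *ᵥ Y ω ⬝ᵥ B *ᵥ Y ω / 2) ∂μ ≤ ∏ a, (√(1 - e a))⁻¹ := by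
  have hF := integrable_exp_mulVec_dotProduct_pi_gaussianReal_prod hY hBBt he
  have hlin : ∀ ω, exp (B *ᵥ Y ω ⬝ᵥ B *ᵥ Y ω / 2) = ∫ g, exp (B *ᵥ Y ω ⬝ᵥ g) ∂𝒩 := fun ω ↦
    (integral_exp_dotProduct_pi_gaussianReal _).symm
  simp_rw [hlin]
  refine ⟨hF.integral_prod_right, ?_⟩
  calc ∫ ω, ∫ g, exp (B *ᵥ Y ω ⬝ᵥ g) ∂𝒩 ∂μ = ∫ g, ∫ ω, exp (B *ᵥ Y ω ⬝ᵥ g) ∂μ ∂𝒩 :=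
        (integral_integral_swap hF).symm
    _ ≤ ∫ g, exp (∑ a, e a * g a ^ 2 / 2) ∂𝒩 :=
        integral_mono hF.integral_prod_left (integrable_exp_sum_mul_sq_pi_gaussianReal he)
          (integral_exp_mulVec_dotProduct_le hY hBBt)
    _ = ∏ a, (√(1 - e a))⁻¹ := integral_exp_sum_mul_sq_pi_gaussianReal he

end Decoupling

theorem mgf_dotProduct_mulVec_le_exp_trace {Ω ι : Type*} [MeasurableSpace Ω]
    {μ : Measure Ω} [SFinite μ] [Fintype ι] [DecidableEq ι] {Y : Ω → ι → ℝ}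
    (hY : ∀ u, HasSubgaussianMGF (fun ω ↦ u ⬝ᵥ Y ω) (u ⬝ᵥ u).toNNReal μ)
    {M : Matrix ι ι ℝ} (hM : M.PosSemidef) {t : ℝ} (ht : 0 ≤ t)
    (hop : ∀ v, t * (v ⬝ᵥ M *ᵥ v) ≤ 1 / 4 * (v ⬝ᵥ v)) :
    Integrable (fun ω ↦ exp (t * (Y ω ⬝ᵥ M *ᵥ Y ω))) μ ∧
      mgf (fun ω ↦ Y ω ⬝ᵥ M *ᵥ Y ω) μ t ≤ exp (2 * t * M.trace) := by
  have hN : ((2 * t) • M).PosSemidef := hM.smul (by positivity)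
  obtain ⟨B, hBtB, hBBt⟩ := hN.exists_transpose_mul_self_eq_and_mul_transpose_eq_diagonal
  set e := hN.1.eigenvalues
  have hquad : ∀ v, t * (v ⬝ᵥ M *ᵥ v) = B *ᵥ v ⬝ᵥ B *ᵥ v / 2 := fun v ↦ by
    rw [← dotProduct_transpose_mul_self_mulVec, hBtB, smul_mulVec, dotProduct_smul, smul_eq_mul]
    ring
  have he : ∀ a, e a ≤ 1 / 2 := le_of_mul_transpose_eq_diagonal hBBt (by norm_num) fun v ↦ by
    linarith [hquad v, hop v]
  have htrace : 2 * t * M.trace = ∑ a, e a := by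
    rw [← smul_eq_mul, ← trace_smul, ← hBtB, trace_mul_comm, hBBt, trace_diagonal]
  simp_rw [mgf, hquad]
  obtain ⟨hint, hle⟩ :=
    integral_exp_half_mulVec_dotProduct_self_le hY hBBt fun a ↦ by linarith [he a]
  refine ⟨hint, hle.trans ?_⟩
  rw [htrace, exp_sum]
  exact Finset.prod_le_prod (fun _ _ ↦ by positivity)
    fun a _ ↦ inv_sqrt_one_sub_le_exp (hN.eigenvalues_nonneg a) (he a)

lemma one_sub_exp_mul_mgf_le_measureReal_le {Ω : Type*} [MeasurableSpace Ω] {μ : Measure Ω}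
    [IsProbabilityMeasure μ] {X : Ω → ℝ} {t : ℝ} (ht : 0 ≤ t)
    (hint : Integrable (fun ω ↦ exp (t * X ω)) μ) (ε : ℝ) :
    1 - exp (-t * ε) * mgf X μ t ≤ μ.real {ω | X ω ≤ ε} := by
  have hcover : μ.real Set.univ ≤ μ.real {ω | X ω ≤ ε} + μ.real {ω | ε ≤ X ω} := by
    refine (measureReal_mono fun ω _ ↦ ?_).trans (measureReal_union_le _ _)
    exact le_total (X ω) ε
  linarith [measure_ge_le_exp_mul_mgf ε ht hint, probReal_univ (μ := μ)]

/-- Bernstein's inequality for sub-Gaussian quadratic forms: there is a universal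
constant `C` such that for any independent, mean-zero, bounded-by-1 components `V` and
any symmetric PSD matrix `M` with `Tr M ≤ d/m` and operator norm at most `1/m`,
`VᵀMV ≤ C (d + log(1/δ))/m` with probability at least `1 - δ`. -/
theorem stmt_10 :
    ∃ C : ℝ, 0 < C ∧
      ∀ (m d : ℕ), 0 < m →
      ∀ (Ω : Type) (_ : MeasurableSpace Ω) (μ : Measure Ω), IsProbabilityMeasure μ →
      ∀ (V : Fin m → Ω → ℝ) (M : Matrix (Fin m) (Fin m) ℝ),
        iIndepFun V μ →
        (∀ i, Measurable (V i)) →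
        (∀ i, μ[V i] = 0) →
        (∀ i, ∀ᵐ ω ∂μ, |V i ω| ≤ 1) →
        M.IsSymm → M.PosSemidef →
        M.trace ≤ (d : ℝ) / m →
        (∀ v : Fin m → ℝ, v ⬝ᵥ M.mulVec v ≤ (1 / m) * (v ⬝ᵥ v)) →
        ∀ δ : ℝ, 0 < δ → δ < 1 →
          1 - δ ≤
            (μ {ω | (fun i => V i ω) ⬝ᵥ M.mulVec (fun i => V i ω)
                ≤ C * ((d : ℝ) + Real.log (1 / δ)) / m}).toReal := by
  refine ⟨4, by norm_num, ?_⟩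
  intro m d hm Ω _ μ hμ V M hV hmeas hmean hbdd _ hM hTr hOp δ hδ0 _
  have hm' : (0 : ℝ) < m := Nat.cast_pos.mpr hm
  set X : Ω → ℝ := fun ω ↦ (fun i ↦ V i ω) ⬝ᵥ M *ᵥ fun i ↦ V i ω
  obtain ⟨hint, hmgf⟩ := mgf_dotProduct_mulVec_le_exp_trace
    (hasSubgaussianMGF_dotProduct_of_iIndepFun hV fun i ↦
      hasSubgaussianMGF_of_abs_le_one (hmeas i).aemeasurable (hbdd i) (hmean i))
    hM (by positivity : (0 : ℝ) ≤ m / 4) fun v ↦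
      calc m / 4 * (v ⬝ᵥ M *ᵥ v) ≤ m / 4 * (1 / m * (v ⬝ᵥ v)) := by gcongr; exact hOp v
        _ = 1 / 4 * (v ⬝ᵥ v) := by field_simp
  have hmgf_le : mgf X μ (m / 4) ≤ exp (d / 2) := by
    refine hmgf.trans (exp_le_exp.mpr ?_)
    calc 2 * (m / 4) * M.trace ≤ 2 * (m / 4) * (d / m) := by gcongr
      _ = d / 2 := by field_simp; ring
  have htail : exp (-(m / 4) * (4 * (d + log (1 / δ)) / m)) * exp (d / 2) ≤ δ := by
    calc _ = exp (-(d / 2) - log (1 / δ)) := by rw [← exp_add]; congr 1; field_simp; ring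
      _ ≤ exp (-log (1 / δ)) := by gcongr; linarith [(d.cast_nonneg : (0 : ℝ) ≤ d)]
      _ = δ := by rw [one_div, log_inv, neg_neg, exp_log hδ0]
  refine le_trans ?_ (one_sub_exp_mul_mgf_le_measureReal_le (by positivity) hint _)
  linarith [mul_le_mul_of_nonneg_left hmgf_le (exp_pos (-(m / 4) * (4 * (d + log (1 / δ)) / m))).le]
end

section
/- If a twice-differentiable function L : ℝ^d → ℝ satisfies vᵀ∇²L(θ)v ≥ β·‖v‖²_Σ for all θ, v (where ‖v‖²_Σ = vᵀΣv for a PSD matrix Σ), and θ̂ minimizes L while θ* is another point with L(θ̂) ≤ L(θ*), then β·‖θ̂ − θ*‖²_Σ ≤ ‖∇L(θ*)‖_{Σ^{-1}}·‖θ̂ − θ*‖_Σ, hence ‖θ̂ − θ*‖_Σ ≤ (1/β)·‖∇L(θ*)‖_{Σ^{-1}}. -/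
/-! Along the segment from `θstar` to `θhat`, the directional derivative `t ↦ ∇L(θstar + tΔ)·Δ`
has slope at least `β‖Δ‖²_Σ` and vanishes at the minimiser `θhat`, so
`β‖Δ‖²_Σ ≤ -⟨∇L(θstar), Δ⟩`. Cauchy–Schwarz for the inner product `⟨x, y⟩_Σ = xᵀΣy`, applied to
`Σ⁻¹∇L(θstar)` and `Δ`, bounds the right side by `‖∇L(θstar)‖_{Σ⁻¹}‖Δ‖_Σ`. -/

open Matrix

theorem Matrix.PosSemidef.dotProduct_mulVec_sq_le {n : Type*} [Fintype n] {M : Matrix n n ℝ}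
    (hM : M.PosSemidef) (x y : n → ℝ) :
    (x ⬝ᵥ M *ᵥ y) ^ 2 ≤ (x ⬝ᵥ M *ᵥ x) * (y ⬝ᵥ M *ᵥ y) := by
  let := M.toSeminormedAddCommGroup hM
  let := M.toInnerProductSpace hM
  have hcs : (M *ᵥ y ⬝ᵥ x) * (M *ᵥ y ⬝ᵥ x) ≤ (M *ᵥ x ⬝ᵥ x) * (M *ᵥ y ⬝ᵥ y) :=
    real_inner_mul_inner_self_le x y
  simpa only [sq, dotProduct_comm _ x, dotProduct_comm _ y] using hcs

theorem Matrix.PosDef.abs_dotProduct_le {n : Type*} [Fintype n] [DecidableEq n]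
    {S : Matrix n n ℝ} (hS : S.PosDef) (g v : n → ℝ) :
    |g ⬝ᵥ v| ≤ √(g ⬝ᵥ S⁻¹ *ᵥ g) * √(v ⬝ᵥ S *ᵥ v) := by
  have hSg : S *ᵥ (S⁻¹ *ᵥ g) = g := by
    rw [mulVec_mulVec, mul_nonsing_inv S (isUnit_iff_ne_zero.mpr hS.det_pos.ne'), one_mulVec]
  have hSt : Sᵀ = S := IsSymm.eq hS.isHermitian
  have hcross : S⁻¹ *ᵥ g ⬝ᵥ S *ᵥ v = g ⬝ᵥ v := by
    rw [dotProduct_comm, ← vecMul_transpose, hSt, ← dotProduct_mulVec, hSg, dotProduct_comm]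
  have hcs := hS.posSemidef.dotProduct_mulVec_sq_le (S⁻¹ *ᵥ g) v
  rw [hcross, hSg, dotProduct_comm _ g] at hcs
  have hdual : 0 ≤ g ⬝ᵥ S⁻¹ *ᵥ g := by simpa using hS.inv.posSemidef.dotProduct_mulVec_nonneg g
  rw [← Real.sqrt_mul hdual]
  exact Real.abs_le_sqrt hcs

section
variable {E : Type*} [NormedAddCommGroup E] [NormedSpace ℝ E] {f : E → ℝ}

theorem hasDerivAt_fderiv_add_smul_apply (hf : ContDiff ℝ 2 f) (x v : E) (t : ℝ) :
    HasDerivAt (fun s : ℝ => fderiv ℝ f (x + s • v) v)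
      (iteratedFDeriv ℝ 2 f (x + t • v) ![v, v]) t := by
  have hline : HasDerivAt (fun s : ℝ => x + s • v) v t := by
    simpa using ((hasDerivAt_id t).smul_const v).const_add x
  have hf' : Differentiable ℝ (fderiv ℝ f) :=
    (hf.fderiv_right (by norm_num)).differentiable one_ne_zero
  simp only [iteratedFDeriv_two_apply, Matrix.cons_val_zero, Matrix.cons_val_one]
  exact (ContinuousLinearMap.apply ℝ ℝ v).hasFDerivAt.comp_hasDerivAt t
    ((hf' _).hasFDerivAt.comp_hasDerivAt t hline)

theorem le_fderiv_add_apply_sub_fderiv_apply (hf : ContDiff ℝ 2 f) {m : ℝ} (x v : E)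
    (hm : ∀ t ∈ Set.Ioo (0 : ℝ) 1, m ≤ iteratedFDeriv ℝ 2 f (x + t • v) ![v, v]) :
    m ≤ fderiv ℝ f (x + v) v - fderiv ℝ f x v := by
  obtain ⟨t, ht, hslope⟩ := exists_hasDerivAt_eq_slope _ _ zero_lt_one
    (fun t _ => (hasDerivAt_fderiv_add_smul_apply hf x v t).continuousAt.continuousWithinAt)
    (fun t _ => hasDerivAt_fderiv_add_smul_apply hf x v t)
  simpa [hslope] using hm t ht

end

theorem le_one_div_mul_of_mul_sq_le_mul {β c s : ℝ} (hβ : 0 < β) (hc : 0 ≤ c) (hs : 0 ≤ s)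
    (h : β * s ^ 2 ≤ c * s) : s ≤ 1 / β * c := by
  rcases hs.eq_or_lt with rfl | hs
  · positivity
  · rw [one_div_mul_eq_div, le_div_iff₀ hβ, mul_comm]
    exact le_of_mul_le_mul_right (by linarith) hs

theorem stmt_12_general (d : ℕ) (L : (Fin d → ℝ) → ℝ) (hL : ContDiff ℝ 2 L)
    (S : Matrix (Fin d) (Fin d) ℝ) (hS : S.PosDef) (β : ℝ) (hβ : 0 < β)
    (hHess : ∀ (θ v : Fin d → ℝ),
      β * (v ⬝ᵥ S.mulVec v) ≤ iteratedFDeriv ℝ 2 L θ ![v, v])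
    (g θhat θstar : Fin d → ℝ)
    (hg : ∀ v : Fin d → ℝ, fderiv ℝ L θstar v = g ⬝ᵥ v)
    (hmin : ∀ θ, L θhat ≤ L θ) :
    β * ((θhat - θstar) ⬝ᵥ S.mulVec (θhat - θstar)) ≤
      Real.sqrt (g ⬝ᵥ S⁻¹.mulVec g) *
        Real.sqrt ((θhat - θstar) ⬝ᵥ S.mulVec (θhat - θstar)) ∧
    Real.sqrt ((θhat - θstar) ⬝ᵥ S.mulVec (θhat - θstar)) ≤
      (1 / β) * Real.sqrt (g ⬝ᵥ S⁻¹.mulVec g) := by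
  set Δ := θhat - θstar
  have hcrit : fderiv ℝ L θhat = 0 := IsLocalMin.fderiv_eq_zero (.of_forall hmin)
  have hmono := le_fderiv_add_apply_sub_fderiv_apply hL θstar Δ fun t _ => hHess _ Δ
  rw [add_sub_cancel, hcrit, hg] at hmono
  have hmain : β * (Δ ⬝ᵥ S *ᵥ Δ) ≤ √(g ⬝ᵥ S⁻¹ *ᵥ g) * √(Δ ⬝ᵥ S *ᵥ Δ) :=
    calc β * (Δ ⬝ᵥ S *ᵥ Δ) ≤ -(g ⬝ᵥ Δ) := by simpa using hmono
      _ ≤ |g ⬝ᵥ Δ| := neg_le_abs _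
      _ ≤ _ := hS.abs_dotProduct_le g Δ
  refine ⟨hmain, le_one_div_mul_of_mul_sq_le_mul hβ (Real.sqrt_nonneg _) (Real.sqrt_nonneg _) ?_⟩
  have hQ : 0 ≤ Δ ⬝ᵥ S *ᵥ Δ := by simpa using hS.posSemidef.dotProduct_mulVec_nonneg Δ
  rwa [Real.sq_sqrt hQ]

theorem stmt_12 (d : ℕ) (L : (Fin d → ℝ) → ℝ) (hL : ContDiff ℝ 2 L)
    (S : Matrix (Fin d) (Fin d) ℝ) (hS : S.PosDef) (β : ℝ) (hβ : 0 < β)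
    (hHess : ∀ (θ v : Fin d → ℝ),
      β * (v ⬝ᵥ S.mulVec v) ≤ iteratedFDeriv ℝ 2 L θ ![v, v])
    (g θhat θstar : Fin d → ℝ)
    (hg : ∀ v : Fin d → ℝ, fderiv ℝ L θstar v = g ⬝ᵥ v)
    (hmin : ∀ θ, L θhat ≤ L θ) (hle : L θhat ≤ L θstar) :
    β * ((θhat - θstar) ⬝ᵥ S.mulVec (θhat - θstar)) ≤
      Real.sqrt (g ⬝ᵥ S⁻¹.mulVec g) *
        Real.sqrt ((θhat - θstar) ⬝ᵥ S.mulVec (θhat - θstar)) ∧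
    Real.sqrt ((θhat - θstar) ⬝ᵥ S.mulVec (θhat - θstar)) ≤
      (1 / β) * Real.sqrt (g ⬝ᵥ S⁻¹.mulVec g) :=
  stmt_12_general d L hL S hS β hβ hHess g θhat θstar hg hmin
end
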